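/- arXiv:2108.10032 — 2 statements merged into one kernel-verified Lean document; each statement's English description precedes it below -/
import Mathlib

section
/- Let D = (D₁, D₂, D₃) ∈ ℝ³ be nonzero, and set a = 2D₁² + D₂² + D₃², b = D₁² + 2D₂² + D₃², c = D₁² + D₂² + 2D₃², g = 2D₁D₂, h = 2D₁D₃, i = 2D₂D₃, and m = 2D₁² + 2D₂² + D₃². Then the symmetric matrix H = [[2a, g, h], [g, 2b, i], [h, i, 2c]] has leading principal minors Δ₁ = 2a > 0, Δ₂ = 4m‖D‖² > 0, Δ₃ = det H = 16‖D‖⁶ > 0; in particular H is positive definite. -/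
open Matrix

/-! The Hessian is `2‖D‖² • 1 + 2 • D Dᵀ`, i.e. its quadratic form is
`x ↦ 2‖D‖²‖x‖² + 2⟪D, x⟫²`: a positive multiple of the identity plus a rank-one positive
semidefinite matrix, hence positive definite. The minors are then polynomial identities in `D`. -/

theorem sq_add_sq_add_sq_pos {x y z : ℝ} (h : ¬(x = 0 ∧ y = 0 ∧ z = 0)) :
    0 < x ^ 2 + y ^ 2 + z ^ 2 := by
  obtain hx | hyz := not_and_or.mp h
  · positivity
  obtain hy | hz := not_and_or.mp hyz <;> positivity

theorem Matrix.posDef_smul_one_add_smul_vecMulVec_self {n : Type*} [Fintype n] [DecidableEq n]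
    {c d : ℝ} (hc : 0 < c) (hd : 0 ≤ d) (v : n → ℝ) :
    (c • (1 : Matrix n n ℝ) + d • vecMulVec v v).PosDef :=
  (PosDef.one.smul hc).add_posSemidef ((posSemidef_vecMulVec_self_star v).smul hd)

theorem hessian_eq_smul_one_add_smul_vecMulVec (D₁ D₂ D₃ : ℝ) :
    !![2 * (2 * D₁ ^ 2 + D₂ ^ 2 + D₃ ^ 2), 2 * D₁ * D₂, 2 * D₁ * D₃;
       2 * D₁ * D₂, 2 * (D₁ ^ 2 + 2 * D₂ ^ 2 + D₃ ^ 2), 2 * D₂ * D₃;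
       2 * D₁ * D₃, 2 * D₂ * D₃, 2 * (D₁ ^ 2 + D₂ ^ 2 + 2 * D₃ ^ 2)] =
      (2 * (D₁ ^ 2 + D₂ ^ 2 + D₃ ^ 2)) • (1 : Matrix (Fin 3) (Fin 3) ℝ) +
        (2 : ℝ) • vecMulVec ![D₁, D₂, D₃] ![D₁, D₂, D₃] := by
  ext i j
  fin_cases i <;> fin_cases j <;>
    simp only [vecMulVec, smul_of, Matrix.add_apply, Matrix.smul_apply, of_apply, Pi.smul_apply,
      one_apply_eq, one_apply_ne, ne_eq, Fin.reduceEq, not_false_eq_true, Fin.isValue,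
      Fin.zero_eta, Fin.mk_one, Fin.reduceFinMk, cons_val', cons_val_zero, cons_val_one, cons_val,
      cons_val_fin_one, smul_eq_mul, mul_one, mul_zero, zero_add] <;>
    ring

/-- The Hessian of the squared torsion norm: its leading principal minors are
`2a`, `4m‖D‖²`, `16‖D‖⁶`, all positive, so it is positive definite. -/
theorem stmt13 (D₁ D₂ D₃ : ℝ) (hD : ¬(D₁ = 0 ∧ D₂ = 0 ∧ D₃ = 0))
    (a b c g h i m nsq : ℝ)
    (ha : a = 2 * D₁ ^ 2 + D₂ ^ 2 + D₃ ^ 2)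
    (hb : b = D₁ ^ 2 + 2 * D₂ ^ 2 + D₃ ^ 2)
    (hc : c = D₁ ^ 2 + D₂ ^ 2 + 2 * D₃ ^ 2)
    (hg : g = 2 * D₁ * D₂) (hh : h = 2 * D₁ * D₃) (hi : i = 2 * D₂ * D₃)
    (hm : m = 2 * D₁ ^ 2 + 2 * D₂ ^ 2 + D₃ ^ 2)
    (hn : nsq = D₁ ^ 2 + D₂ ^ 2 + D₃ ^ 2) :
    2 * a > 0 ∧
    (!![2 * a, g; g, 2 * b]).det = 4 * m * nsq ∧ 4 * m * nsq > 0 ∧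
    (!![2 * a, g, h; g, 2 * b, i; h, i, 2 * c]).det = 16 * nsq ^ 3 ∧ 16 * nsq ^ 3 > 0 ∧
    (!![2 * a, g, h; g, 2 * b, i; h, i, 2 * c]).PosDef := by
  have hnsq : 0 < nsq := hn ▸ sq_add_sq_add_sq_pos hD
  have ha' : a = nsq + D₁ ^ 2 := by rw [ha, hn]; ring
  have hm' : m = nsq + D₁ ^ 2 + D₂ ^ 2 := by rw [hm, hn]; ring
  refine ⟨by rw [ha']; positivity, ?_, by rw [hm']; positivity, ?_, by positivity, ?_⟩
  · subst ha hb hg hm hn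
    rw [det_fin_two_of]
    ring
  · subst ha hb hc hg hh hi hn
    rw [det_fin_three]
    simp only [of_apply, cons_val', cons_val_zero, cons_val_one, cons_val_two, cons_val_fin_one,
      Fin.isValue, tail_cons, head_cons, head_fin_const]
    ring
  · subst ha hb hc hg hh hi
    rw [hessian_eq_smul_one_add_smul_vecMulVec, ← hn]
    exact posDef_smul_one_add_smul_vecMulVec_self (by positivity) zero_le_two _
end

section
/- With D, a, b, c, g, h, i as above and k = D₁² + 2D₂² + 2D₃², l = 2D₁² + D₂² + 2D₃², m = 2D₁² + 2D₂² + D₃², the inverse of H = [[2a, g, h], [g, 2b, i], [h, i, 2c]] equals (1/(8‖D‖⁴))·[[2k, −g, −h], [−g, 2l, −i], [−h, −i, 2m]]. Consequently, for any d, e, f ∈ ℝ, the unique solution of H·(s,t,u)ᵀ = (−d,−e,−f)ᵀ is s⁰ = (−2dk + eg + fh)/(8‖D‖⁴), t⁰ = (dg − 2el + fi)/(8‖D‖⁴), u⁰ = (dh + ei − 2fm)/(8‖D‖⁴). -/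
/-!
Writing `D` for the vector `(D₁, D₂, D₃)`, `N = ‖D‖²` and `P = D Dᵀ`, the matrix is
`H = 2 (N • 1 + P)`. Since `P² = N P`, one has `(N • 1 + P)(2N • 1 - P) = 2N² • 1`
(a case of the Sherman–Morrison formula), which gives `H⁻¹ = (4N²)⁻¹ (2N • 1 - P)` as soon
as `N ≠ 0`, i.e. `D ≠ 0`. The solution of the linear system is then `H⁻¹ (−d, −e, −f)ᵀ`.
-/

open Matrix

section

variable {ι K : Type*} [Fintype ι] [Field K]

lemma vecMulVec_self_mul_self (D : ι → K) :
    vecMulVec D D * vecMulVec D D = (D ⬝ᵥ D) • vecMulVec D D := by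
  rw [vecMulVec_mul_vecMulVec, vecMulVec_smul]

lemma smul_one_add_vecMulVec_self_mul_smul_one_sub [DecidableEq ι] (D : ι → K) :
    ((D ⬝ᵥ D) • 1 + vecMulVec D D) * ((2 * (D ⬝ᵥ D)) • 1 - vecMulVec D D)
      = (2 * (D ⬝ᵥ D) ^ 2) • (1 : Matrix ι ι K) := by
  simp only [add_mul, mul_sub, smul_mul_assoc, mul_smul_comm, one_mul, mul_one,
    vecMulVec_self_mul_self]
  module

lemma mulVec_eq_and_unique_of_inv_mulVec_eq [DecidableEq ι] {A : Matrix ι ι K}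
    (hA : IsUnit A.det) {v₀ w : ι → K} (h : A⁻¹ *ᵥ w = v₀) :
    A *ᵥ v₀ = w ∧ ∀ v, A *ᵥ v = w → v = v₀ := by
  subst h
  refine ⟨by rw [mulVec_mulVec, mul_nonsing_inv A hA, one_mulVec], fun v hv => ?_⟩
  rw [← hv, mulVec_mulVec, nonsing_inv_mul A hA, one_mulVec]

end

/-- The explicit inverse of the Hessian `H` and the resulting unique solution
`(s⁰, t⁰, u⁰)` of `H·(s,t,u)ᵀ = (−d,−e,−f)ᵀ`. -/
theorem stmt14 (D₁ D₂ D₃ : ℝ) (hD : ¬(D₁ = 0 ∧ D₂ = 0 ∧ D₃ = 0))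
    (a b c g h i k l m nsq : ℝ)
    (ha : a = 2 * D₁ ^ 2 + D₂ ^ 2 + D₃ ^ 2)
    (hb : b = D₁ ^ 2 + 2 * D₂ ^ 2 + D₃ ^ 2)
    (hc : c = D₁ ^ 2 + D₂ ^ 2 + 2 * D₃ ^ 2)
    (hg : g = 2 * D₁ * D₂) (hh : h = 2 * D₁ * D₃) (hi : i = 2 * D₂ * D₃)
    (hk : k = D₁ ^ 2 + 2 * D₂ ^ 2 + 2 * D₃ ^ 2)
    (hl : l = 2 * D₁ ^ 2 + D₂ ^ 2 + 2 * D₃ ^ 2)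
    (hm : m = 2 * D₁ ^ 2 + 2 * D₂ ^ 2 + D₃ ^ 2)
    (hn : nsq = D₁ ^ 2 + D₂ ^ 2 + D₃ ^ 2) :
    (!![2 * a, g, h; g, 2 * b, i; h, i, 2 * c])⁻¹
      = (1 / (8 * nsq ^ 2)) • !![2 * k, -g, -h; -g, 2 * l, -i; -h, -i, 2 * m] ∧
    ∀ d e f : ℝ,
      (!![2 * a, g, h; g, 2 * b, i; h, i, 2 * c]).mulVec
          ![(-2 * d * k + e * g + f * h) / (8 * nsq ^ 2),
            (d * g - 2 * e * l + f * i) / (8 * nsq ^ 2),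
            (d * h + e * i - 2 * f * m) / (8 * nsq ^ 2)] = ![-d, -e, -f] ∧
      ∀ v : Fin 3 → ℝ,
        (!![2 * a, g, h; g, 2 * b, i; h, i, 2 * c]).mulVec v = ![-d, -e, -f] →
          v = ![(-2 * d * k + e * g + f * h) / (8 * nsq ^ 2),
                (d * g - 2 * e * l + f * i) / (8 * nsq ^ 2),
                (d * h + e * i - 2 * f * m) / (8 * nsq ^ 2)] := by
  set D : Fin 3 → ℝ := ![D₁, D₂, D₃]
  have hN : D ⬝ᵥ D = nsq := by
    simp only [D, dotProduct, Fin.sum_univ_three, cons_val_zero, cons_val_one, cons_val, hn]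
    ring
  have hN0 : nsq ≠ 0 := by
    rw [← hN, Ne, dotProduct_self_eq_zero]
    exact fun h0 => hD ⟨congrFun h0 0, congrFun h0 1, congrFun h0 2⟩
  set H := !![2 * a, g, h; g, 2 * b, i; h, i, 2 * c]
  set B := (1 / (8 * nsq ^ 2)) • !![2 * k, -g, -h; -g, 2 * l, -i; -h, -i, 2 * m]
  have hH : H = (2 : ℝ) • (nsq • 1 + vecMulVec D D) := by
    subst_vars; ext x y; fin_cases x <;> fin_cases y <;> simp [H, D, one_apply] <;> ring
  have hB : B = (4 * nsq ^ 2)⁻¹ • ((2 * nsq) • 1 - vecMulVec D D) := by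
    subst_vars
    ext x y; fin_cases x <;> fin_cases y <;> simp [B, D, one_apply] <;> field_simp <;> ring
  have hHB : H * B = 1 := by
    rw [hH, hB, smul_mul_smul_comm, ← hN, smul_one_add_vecMulVec_self_mul_smul_one_sub, smul_smul,
      hN, show 2 * (4 * nsq ^ 2)⁻¹ * (2 * nsq ^ 2) = 1 by field_simp; ring, one_smul]
  have hHinv := inv_eq_right_inv hHB
  refine ⟨hHinv, fun d e f =>
    mulVec_eq_and_unique_of_inv_mulVec_eq (isUnit_det_of_right_inverse hHB) ?_⟩
  rw [hHinv]
  subst_vars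
  ext x; fin_cases x <;> simp [B, mulVec, dotProduct, Fin.sum_univ_three] <;> field_simp <;> ring
end
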